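/- Let P₁,…,Pₙ be pairwise distinct pure qubit states with n ≥ 2. Then either P₁,…,Pₙ are antidistinguishable, or there exists a pure qubit state P_{n+1} with P_{n+1} ≠ P_j for all j = 1,…,n such that P₁,…,Pₙ,P_{n+1} are antidistinguishable. That is, any finite set of pure qubit states is either antidistinguishable or can be made antidistinguishable by adding a single pure state. -/

import Mathlib

open Matrix BigOperators
open scoped ComplexOrder

/-- A pure qubit state: a rank-one orthogonal projection on ℂ². -/
def IsPureState (P : Matrix (Fin 2) (Fin 2) ℂ) : Prop :=
  P.IsHermitian ∧ P * P = P ∧ P.trace = 1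

/-- A POVM on ℂ² with outcomes 1,…,n. -/
def IsPOVM {n : ℕ} (M : Fin n → Matrix (Fin 2) (Fin 2) ℂ) : Prop :=
  (∀ j, (M j).PosSemidef) ∧ ∑ j, M j = 1

/-- Qubit states are antidistinguishable if some POVM excludes each with certainty,
with every outcome occurring for at least one state. -/
def Antidistinguishable {n : ℕ} (ρ : Fin n → Matrix (Fin 2) (Fin 2) ℂ) : Prop :=
  ∃ M : Fin n → Matrix (Fin 2) (Fin 2) ℂ, IsPOVM M ∧
    ∀ j, (ρ j * M j).trace = 0 ∧ ∑ k, (ρ k * M j).trace ≠ 0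

/-!
A Hermitian trace-one qubit matrix is a Bloch matrix `P_u = (1 + u · σ) / 2`, pure exactly when
`‖u‖ = 1`, and `tr (P_u P_v) = (1 + ⟪u, v⟫) / 2`. So if a positive combination `∑ cⱼ uⱼ` of the
Bloch vectors of distinct pure states vanishes, the POVM `Mⱼ ∝ cⱼ P_{-uⱼ} = cⱼ (1 - P_{uⱼ})`
excludes each state with certainty. For distinct unit vectors `uⱼ` put `s = ∑ uⱼ`. If `s = 0` we
are done; otherwise `v = -s / ‖s‖` satisfies `s + ‖s‖ v = 0`. Either `v` is a new state, and then
the enlarged family is antidistinguishable, or `v = u_k`, and then `∑ uⱼ + ‖s‖ u_k = 0` shows that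
the original family already is.
-/

open scoped RealInnerProductSpace

local notation "𝔼³" => EuclideanSpace ℝ (Fin 3)

lemma EuclideanSpace.inner_eq_fin_three (u v : 𝔼³) :
    ⟪u, v⟫ = u 0 * v 0 + u 1 * v 1 + u 2 * v 2 := by
  simp only [PiLp.inner_apply, Fin.sum_univ_three, RCLike.inner_apply, conj_trivial]
  ring

/-- `u · σ = u₀ σₓ + u₁ σ_y + u₂ σ_z` for the Pauli matrices `σₓ, σ_y, σ_z`. -/
def pauliDot : 𝔼³ →ₗ[ℝ] Matrix (Fin 2) (Fin 2) ℂ where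
  toFun u := !![(u 2 : ℂ), u 0 - u 1 * Complex.I; u 0 + u 1 * Complex.I, -(u 2 : ℂ)]
  map_add' u v := by
    ext i j; fin_cases i <;> fin_cases j <;> simp <;> ring
  map_smul' c u := by
    ext i j; fin_cases i <;> fin_cases j <;> simp <;> ring

lemma pauliDot_isHermitian (u : 𝔼³) : (pauliDot u).IsHermitian := by
  ext i j; fin_cases i <;> fin_cases j <;> simp [pauliDot, Complex.ext_iff]

lemma trace_pauliDot (u : 𝔼³) : (pauliDot u).trace = 0 := by
  simp [pauliDot, trace_fin_two]

lemma pauliDot_mul_self (u : 𝔼³) : pauliDot u * pauliDot u = (‖u‖ ^ 2 : ℝ) • 1 := by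
  rw [← real_inner_self_eq_norm_sq, EuclideanSpace.inner_eq_fin_three]
  ext i j; fin_cases i <;> fin_cases j <;> simp [pauliDot] <;> grind [Complex.I_sq]

lemma trace_pauliDot_mul (u v : 𝔼³) :
    (pauliDot u * pauliDot v).trace = (2 * ⟪u, v⟫ : ℝ) := by
  rw [EuclideanSpace.inner_eq_fin_three]
  simp [pauliDot, trace_fin_two]
  grind [Complex.I_sq]

lemma pauliDot_injective : Function.Injective pauliDot := by
  refine (injective_iff_map_eq_zero pauliDot).2 fun u hu => ?_
  have h := trace_pauliDot_mul u u
  rw [hu, zero_mul, trace_zero, real_inner_self_eq_norm_sq] at h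
  simpa using h

noncomputable def blochState (u : 𝔼³) : Matrix (Fin 2) (Fin 2) ℂ :=
  (2⁻¹ : ℝ) • (1 + pauliDot u)

lemma blochState_injective : Function.Injective blochState := by
  intro u v h
  apply pauliDot_injective
  simpa [blochState] using h

lemma trace_blochState (u : 𝔼³) : (blochState u).trace = 1 := by
  simp [blochState, trace_pauliDot]

lemma trace_blochState_mul (u v : 𝔼³) :
    (blochState u * blochState v).trace = ((1 + ⟪u, v⟫) / 2 : ℝ) := by
  simp [blochState, mul_add, add_mul, trace_pauliDot, trace_pauliDot_mul]
  ring

lemma isPureState_blochState {u : 𝔼³} (hu : ‖u‖ = 1) : IsPureState (blochState u) := by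
  refine ⟨(isHermitian_one.add (pauliDot_isHermitian u)).smul (IsSelfAdjoint.all _), ?_,
    trace_blochState u⟩
  simp only [blochState, smul_mul_smul, mul_add, add_mul, pauliDot_mul_self, hu,
    mul_one, one_mul, one_pow, one_smul]
  module

lemma exists_blochState_eq_of_isHermitian {P : Matrix (Fin 2) (Fin 2) ℂ} (hP : P.IsHermitian)
    (htr : P.trace = 1) : ∃ u, blochState u = P := by
  have h00 : (P 0 0).im = 0 := by
    simpa using (congrArg Complex.im (hP.coe_re_apply_self 0)).symm
  have h11 : P 1 1 = 1 - (P 0 0).re := by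
    rw [← htr, trace_fin_two]
    apply Complex.ext <;> simp [h00]
  have h01 : P 0 1 = star (P 1 0) := (hP.apply 0 1).symm
  refine ⟨!₂[2 * (P 1 0).re, 2 * (P 1 0).im, 2 * (P 0 0).re - 1], ?_⟩
  ext i j
  fin_cases i <;> fin_cases j <;> simp [blochState, pauliDot, h00, h11, h01, Complex.ext_iff]
  ring

lemma IsPureState.exists_blochState_eq {P : Matrix (Fin 2) (Fin 2) ℂ} (hP : IsPureState P) :
    ∃ u, ‖u‖ = 1 ∧ blochState u = P := by
  obtain ⟨hH, hsq, htr⟩ := hP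
  obtain ⟨u, rfl⟩ := exists_blochState_eq_of_isHermitian hH htr
  refine ⟨u, ?_, rfl⟩
  have h := trace_blochState_mul u u
  rw [hsq, trace_blochState, real_inner_self_eq_norm_sq] at h
  have hnorm : ‖u‖ ^ 2 = 1 := by
    rw [← Complex.ofReal_one, Complex.ofReal_inj] at h
    linarith
  exact (pow_eq_one_iff_of_nonneg (norm_nonneg u) two_ne_zero).1 hnorm

lemma IsPureState.posSemidef {P : Matrix (Fin 2) (Fin 2) ℂ} (hP : IsPureState P) :
    P.PosSemidef := by
  obtain ⟨hH, hsq, -⟩ := hP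
  simpa [hH.eq, hsq] using posSemidef_conjTranspose_mul_self P

lemma sum_smul_blochState {ι : Type*} [Fintype ι] (c : ι → ℝ) (u : ι → 𝔼³) :
    ∑ j, c j • blochState (u j) =
      (2⁻¹ * ∑ j, c j) • 1 + (2⁻¹ : ℝ) • pauliDot (∑ j, c j • u j) := by
  simp only [blochState, smul_add, Finset.sum_add_distrib, map_sum, map_smul, smul_comm (c _),
    ← Finset.smul_sum, Finset.sum_smul, mul_smul]

lemma isPOVM_smul_blochState {m : ℕ} {c : Fin m → ℝ} {u : Fin m → 𝔼³} (hu : ∀ j, ‖u j‖ = 1)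
    (hc : ∀ j, 0 ≤ c j) (hc₂ : ∑ j, c j = 2) (hcu : ∑ j, c j • u j = 0) :
    IsPOVM fun j => c j • blochState (u j) := by
  refine ⟨fun j => (isPureState_blochState (hu j)).posSemidef.smul (hc j), ?_⟩
  rw [sum_smul_blochState, hc₂, hcu]
  simp

lemma trace_blochState_mul_blochState_neg (u v : 𝔼³) :
    (blochState u * blochState (-v)).trace = ((1 - ⟪u, v⟫) / 2 : ℝ) := by
  rw [trace_blochState_mul, inner_neg_right, ← sub_eq_add_neg]

theorem antidistinguishable_blochState_of_sum_smul_eq_zero {m : ℕ} (hm : 2 ≤ m)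
    {u : Fin m → 𝔼³} (hu : ∀ j, ‖u j‖ = 1) (hinj : Function.Injective u) {c : Fin m → ℝ}
    (hc : ∀ j, 0 < c j) (hcu : ∑ j, c j • u j = 0) :
    Antidistinguishable fun j => blochState (u j) := by
  have hS : 0 < ∑ j, c j := Finset.sum_pos (fun j _ => hc j) ⟨⟨0, by omega⟩, Finset.mem_univ _⟩
  set d : Fin m → ℝ := fun j => 2 / (∑ j, c j) * c j with hd
  have hdpos (j : Fin m) : 0 < d j := mul_pos (div_pos two_pos hS) (hc j)
  have hd₂ : ∑ j, d j = 2 := by rw [hd, ← Finset.mul_sum]; field_simp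
  have hdu : ∑ j, d j • -u j = 0 := by
    simp only [hd, smul_neg, mul_smul, ← Finset.smul_sum, hcu, smul_zero,
      Finset.sum_neg_distrib, neg_zero]
  refine ⟨fun j => d j • blochState (-u j),
    isPOVM_smul_blochState (by simpa using hu) (fun j => (hdpos j).le) hd₂ hdu, fun j => ⟨?_, ?_⟩⟩
  · simp [trace_blochState_mul_blochState_neg, hu]
  · have hterm (k : Fin m) : (blochState (u k) * (d j • blochState (-u j))).trace =
        (d j * ((1 - ⟪u k, u j⟫) / 2) : ℝ) := by
      rw [mul_smul_comm, trace_smul, trace_blochState_mul_blochState_neg]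
      simp
    have : Nontrivial (Fin m) := Fin.nontrivial_iff_two_le.2 hm
    obtain ⟨k, hkj⟩ := exists_ne j
    have hlt : ⟪u k, u j⟫ < 1 :=
      (inner_lt_one_iff_real_of_norm_eq_one (hu k) (hu j)).2 (hinj.ne hkj)
    simp only [hterm, ← Complex.ofReal_sum, Complex.ofReal_ne_zero]
    refine (Finset.sum_pos' (fun i _ => ?_) ⟨k, Finset.mem_univ _, ?_⟩).ne'
    · have := real_inner_le_one_of_norm_eq_one (hu i) (hu j)
      exact mul_nonneg (hdpos j).le (by linarith)
    · exact mul_pos (hdpos j) (by linarith)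

lemma antidistinguishable_snoc_blochState {n : ℕ} (hn : 1 ≤ n) {u : Fin n → 𝔼³}
    (hu : ∀ j, ‖u j‖ = 1) (hinj : Function.Injective u) {v : 𝔼³} (hv : ‖v‖ = 1)
    (hvu : v ∉ Set.range u) {c : Fin n → ℝ} (hc : ∀ j, 0 < c j) {a : ℝ} (ha : 0 < a)
    (hcu : ∑ j, c j • u j + a • v = 0) :
    Antidistinguishable (Fin.snoc (fun j => blochState (u j)) (blochState v)) := by
  let w : Fin (n + 1) → 𝔼³ := Fin.snoc u v
  let c' : Fin (n + 1) → ℝ := Fin.snoc c a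
  have hw (j : Fin (n + 1)) : ‖w j‖ = 1 := by
    induction j using Fin.lastCases <;> simp [w, hu, hv]
  have hc' (j : Fin (n + 1)) : 0 < c' j := by
    induction j using Fin.lastCases <;> simp [c', hc, ha]
  have hc'w : ∑ j, c' j • w j = 0 := by
    simpa [c', w, Fin.sum_univ_castSucc] using hcu
  have key := antidistinguishable_blochState_of_sum_smul_eq_zero (by omega) hw
    (Fin.snoc_injective_iff.2 ⟨hinj, hvu⟩) hc' hc'w
  rwa [← Function.comp_def, Fin.comp_snoc] at key

/-- any finite family of pairwise distinct pure qubit states (n ≥ 2)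
is either antidistinguishable or becomes antidistinguishable after adding a single
new pure qubit state. -/
theorem qubit_antidistinguishable_or_add_one {n : ℕ} (hn : 2 ≤ n)
    (P : Fin n → Matrix (Fin 2) (Fin 2) ℂ) (hP : ∀ j, IsPureState (P j))
    (hinj : Function.Injective P) :
    Antidistinguishable P ∨
      ∃ Q : Matrix (Fin 2) (Fin 2) ℂ, IsPureState Q ∧ (∀ j, Q ≠ P j) ∧
        Antidistinguishable (Fin.snoc P Q) := by
  choose u hu hPu using fun j => (hP j).exists_blochState_eq
  obtain rfl : P = fun j => blochState (u j) := funext fun j => (hPu j).symm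
  have huinj : Function.Injective u := Function.Injective.of_comp (f := blochState) hinj
  set s := ∑ j, u j
  by_cases hs : s = 0
  · exact .inl <| antidistinguishable_blochState_of_sum_smul_eq_zero hn hu huinj
      (c := 1) (fun _ => one_pos) (by simpa using hs)
  set v := -‖s‖⁻¹ • s
  have hv : ‖v‖ = 1 := by simp [v, norm_smul, hs]
  have hsv : s + ‖s‖ • v = 0 := by simp [v, smul_smul, hs]
  by_cases hvu : v ∈ Set.range u
  · obtain ⟨k, hk⟩ := hvu
    refine .inl <| antidistinguishable_blochState_of_sum_smul_eq_zero hn hu huinj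
      (c := fun j => 1 + if j = k then ‖s‖ else 0) (fun j => by positivity) ?_
    simpa [add_smul, Finset.sum_add_distrib, ite_smul, hk] using hsv
  · refine .inr ⟨blochState v, isPureState_blochState hv,
      fun j h => hvu ⟨j, blochState_injective h.symm⟩, ?_⟩
    exact antidistinguishable_snoc_blochState (by omega) hu huinj hv hvu (c := 1)
      (fun _ => one_pos) (norm_pos_iff.2 hs) (by simpa using hsv)
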